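/- arXiv:2304.05036 — 3 statements merged into one kernel-verified Lean document; each statement's English description precedes it below -/
import Mathlib

section
/- For every ψ ∈ ℝ³ with ψ ≠ 0, the Rodrigues matrix coincides with the matrix exponential of ψ̃: exp(ψ̃) = 1 + (sin‖ψ‖/‖ψ‖)·ψ̃ + ((1 − cos‖ψ‖)/‖ψ‖²)·ψ̃², where exp is the exponential of real 3×3 matrices. -/
open Matrix
open scoped Nat

/-- Euclidean norm on `ℝ³`. -/
noncomputable def norm3 (ψ : Fin 3 → ℝ) : ℝ := Real.sqrt (ψ 0 ^ 2 + ψ 1 ^ 2 + ψ 2 ^ 2)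

/-- The unique skew-symmetric matrix `ψ̃` with `ψ̃ v = ψ × v` for all `v`. -/
def tilde (ψ : Fin 3 → ℝ) : Matrix (Fin 3) (Fin 3) ℝ :=
  !![0, -ψ 2, ψ 1; ψ 2, 0, -ψ 0; -ψ 1, ψ 0, 0]

/-- The Rodrigues matrix `Exp_{SO(3)}(ψ)` (for `ψ ≠ 0`). -/
noncomputable def rodrigues (ψ : Fin 3 → ℝ) : Matrix (Fin 3) (Fin 3) ℝ :=
  1 + (Real.sin (norm3 ψ) / norm3 ψ) • tilde ψ +
    ((1 - Real.cos (norm3 ψ)) / norm3 ψ ^ 2) • (tilde ψ ^ 2)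

lemma norm3_sq (ψ : Fin 3 → ℝ) : norm3 ψ ^ 2 = ψ 0 ^ 2 + ψ 1 ^ 2 + ψ 2 ^ 2 :=
  Real.sq_sqrt (by positivity)

lemma tilde_cube' (ψ : Fin 3 → ℝ) :
    tilde ψ ^ 3 = (-(norm3 ψ ^ 2)) • tilde ψ := by
  rw [norm3_sq]
  ext i j
  fin_cases i <;> fin_cases j <;>
    simp [tilde, pow_succ, Matrix.mul_apply, Fin.sum_univ_three] <;> ring

lemma tilde_pow_odd (ψ : Fin 3 → ℝ) (n : ℕ) :
    tilde ψ ^ (2 * n + 1) = ((-1 : ℝ) ^ n * norm3 ψ ^ (2 * n)) • tilde ψ := by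
  induction n with
  | zero => simp
  | succ n ih =>
    have h1 : 2 * (n + 1) + 1 = 2 + (2 * n + 1) := by ring
    rw [h1, pow_add, ih, Matrix.mul_smul, ← pow_succ, tilde_cube', smul_smul]
    congr 1
    ring

lemma tilde_pow_even (ψ : Fin 3 → ℝ) (n : ℕ) :
    tilde ψ ^ (2 * n + 2) = ((-1 : ℝ) ^ n * norm3 ψ ^ (2 * n)) • tilde ψ ^ 2 := by
  have h : 2 * n + 2 = (2 * n + 1) + 1 := rfl
  rw [h, pow_succ, tilde_pow_odd, Matrix.smul_mul, ← pow_two]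

theorem exp_tilde_eq_rodrigues (ψ : Fin 3 → ℝ) (hψ : ψ ≠ 0) :
    NormedSpace.exp (tilde ψ) =
      1 + (Real.sin (norm3 ψ) / norm3 ψ) • tilde ψ +
        ((1 - Real.cos (norm3 ψ)) / norm3 ψ ^ 2) • (tilde ψ ^ 2) := by
  set θ := norm3 ψ with hθdef
  set A := tilde ψ with hAdef
  have hpos : 0 < ψ 0 ^ 2 + ψ 1 ^ 2 + ψ 2 ^ 2 := by
    obtain ⟨i, hi⟩ := Function.ne_iff.mp hψ
    fin_cases i <;> simp only [Pi.zero_apply] at hi <;> positivity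
  have hθ : θ ≠ 0 := ne_of_gt (Real.sqrt_pos.mpr hpos)
  -- scalar series for sin θ / θ
  have hs : HasSum (fun n : ℕ => (-1 : ℝ) ^ n * θ ^ (2 * n) / (2 * n + 1)!)
      (Real.sin θ / θ) := by
    have h := (Real.hasSum_sin θ).div_const θ
    have he : (fun n : ℕ => (-1 : ℝ) ^ n * θ ^ (2 * n) / (2 * n + 1)!) =
        fun n : ℕ => ((-1 : ℝ) ^ n * θ ^ (2 * n + 1) / (2 * n + 1)!) / θ := by
      funext n
      rw [pow_succ]
      field_simp
    rw [he]
    exact h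
  -- scalar series for (1 - cos θ) / θ ^ 2
  have hc1 : HasSum (fun n : ℕ => (-1 : ℝ) ^ (n + 1) * θ ^ (2 * (n + 1)) / (2 * (n + 1))!)
      (Real.cos θ - 1) := by
    have h := (hasSum_nat_add_iff'
      (f := fun n : ℕ => (-1 : ℝ) ^ n * θ ^ (2 * n) / (2 * n)!) 1).mpr (Real.hasSum_cos θ)
    simpa using h
  have hc : HasSum (fun n : ℕ => (-1 : ℝ) ^ n * θ ^ (2 * n) / (2 * n + 2)!)
      ((1 - Real.cos θ) / θ ^ 2) := by
    have h := (hc1.div_const (θ ^ 2)).neg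
    have hval : -((Real.cos θ - 1) / θ ^ 2) = (1 - Real.cos θ) / θ ^ 2 := by ring
    have he : (fun n : ℕ => (-1 : ℝ) ^ n * θ ^ (2 * n) / (2 * n + 2)!) =
        fun n : ℕ => -(((-1 : ℝ) ^ (n + 1) * θ ^ (2 * (n + 1)) / (2 * (n + 1))!) / θ ^ 2) := by
      funext n
      have h2 : 2 * (n + 1) = 2 * n + 2 := by ring
      rw [h2, pow_add]
      field_simp
      ring
    rw [he, ← hval]
    exact h
  -- matrix series
  have ho : HasSum (fun k : ℕ => ((2 * k + 1)! : ℝ)⁻¹ • A ^ (2 * k + 1))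
      ((Real.sin θ / θ) • A) := by
    have h := hs.smul_const A
    convert h using 2 with k
    rw [tilde_pow_odd, smul_smul]
    congr 1
    rw [div_eq_mul_inv]
    ring
  have he1 : HasSum (fun k : ℕ => ((2 * (k + 1))! : ℝ)⁻¹ • A ^ (2 * (k + 1)))
      (((1 - Real.cos θ) / θ ^ 2) • A ^ 2) := by
    have h := hc.smul_const (A ^ 2)
    convert h using 2 with k
    have h2 : 2 * (k + 1) = 2 * k + 2 := by ring
    rw [h2, tilde_pow_even, smul_smul]
    congr 1
    rw [div_eq_mul_inv]
    ring
  have he : HasSum (fun k : ℕ => ((2 * k)! : ℝ)⁻¹ • A ^ (2 * k))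
      (((1 - Real.cos θ) / θ ^ 2) • A ^ 2 + 1) := by
    have h := (hasSum_nat_add_iff
      (f := fun k : ℕ => ((2 * k)! : ℝ)⁻¹ • A ^ (2 * k))
      (g := ((1 - Real.cos θ) / θ ^ 2) • A ^ 2) 1).mp he1
    simpa using h
  have hsum : HasSum (fun n : ℕ => ((n)! : ℝ)⁻¹ • A ^ n)
      ((((1 - Real.cos θ) / θ ^ 2) • A ^ 2 + 1) + (Real.sin θ / θ) • A) :=
    HasSum.even_add_odd he ho
  calc NormedSpace.exp A = ∑' n : ℕ, ((n)! : ℝ)⁻¹ • A ^ n := by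
        rw [NormedSpace.exp_eq_tsum ℝ]
    _ = 1 + (Real.sin θ / θ) • A + ((1 - Real.cos θ) / θ ^ 2) • A ^ 2 := by
        rw [hsum.tsum_eq]; abel
end

section
/- Objectivity of the discrete strain measures of the ℝ¹²-interpolation: let N₀, …, N_p : ℝ → ℝ be differentiable functions with ∑_{i=0}^p N_i(ξ) = 1 for all ξ, let r_i ∈ ℝ³ and A_i be real 3×3 matrices for i = 0,…,p, and define the interpolants r(ξ) := ∑ N_i(ξ) r_i and A(ξ) := ∑ N_i(ξ) A_i. Let R ∈ SO(3) and c ∈ ℝ³, and let r*(ξ) := ∑ N_i(ξ)(c + R r_i) and A*(ξ) := ∑ N_i(ξ)(R A_i) be the interpolants of the transformed nodal values. Then for every ξ: A*(ξ)ᵀ·(r*)'(ξ) = A(ξ)ᵀ·r'(ξ) and A*(ξ)ᵀ·(A*)'(ξ) = A(ξ)ᵀ·A'(ξ). -/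
open Matrix

/-- Entrywise derivative of a matrix-valued function. -/
noncomputable def mderiv {n : Type*} (A : ℝ → Matrix n n ℝ) (t : ℝ) : Matrix n n ℝ :=
  Matrix.of fun i j => deriv (fun s => A s i j) t

/-- Entrywise derivative of a vector-valued function. -/
noncomputable def vderiv {n : Type*} (r : ℝ → n → ℝ) (t : ℝ) : n → ℝ :=
  fun i => deriv (fun s => r s i) t

/-!
Both interpolants are linear in the nodal values, so their derivatives are the interpolants of
the nodal values with the weights `N i'`. These weights sum to zero because the `N i` form a
partition of unity, so the translation `c` drops out of `(r*)'`, and what is left of both strains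
is `(R A)ᵀ (R X) = Aᵀ Rᵀ R X = Aᵀ X`.
-/

section Interpolation

variable {ι : Type*} [Fintype ι] {N : ι → ℝ → ℝ} {ξ : ℝ}

theorem deriv_sum_mul_const (hN : ∀ i, DifferentiableAt ℝ (N i) ξ) (a : ι → ℝ) :
    deriv (fun s => ∑ i, N i s * a i) ξ = ∑ i, deriv (N i) ξ * a i := by
  rw [deriv_fun_sum fun i _ => (hN i).mul_const _]
  exact Finset.sum_congr rfl fun i _ => deriv_mul_const (hN i) _

theorem vderiv_sum_smul {n : Type*} (hN : ∀ i, DifferentiableAt ℝ (N i) ξ) (v : ι → n → ℝ) :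
    vderiv (fun s => ∑ i, N i s • v i) ξ = ∑ i, deriv (N i) ξ • v i := by
  funext j
  simp only [vderiv, Finset.sum_apply, Pi.smul_apply, smul_eq_mul]
  exact deriv_sum_mul_const hN _

theorem mderiv_sum_smul {n : Type*} (hN : ∀ i, DifferentiableAt ℝ (N i) ξ)
    (M : ι → Matrix n n ℝ) :
    mderiv (fun s => ∑ i, N i s • M i) ξ = ∑ i, deriv (N i) ξ • M i := by
  ext a b
  simp only [mderiv, of_apply, Matrix.sum_apply, Matrix.smul_apply, smul_eq_mul]
  exact deriv_sum_mul_const hN _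

theorem sum_deriv_eq_zero_of_sum_eq_one (hN : ∀ i, DifferentiableAt ℝ (N i) ξ)
    (hsum : ∀ s, ∑ i, N i s = 1) : ∑ i, deriv (N i) ξ = 0 := by
  rw [← deriv_fun_sum fun i _ => hN i, funext hsum, deriv_const]

end Interpolation

section Weights

variable {ι α m n k : Type*} [Fintype ι] [Fintype n] [CommSemiring α]

theorem sum_smul_add_mulVec_of_sum_eq_zero {w : ι → α} (hw : ∑ i, w i = 0)
    (c : m → α) (R : Matrix m n α) (v : ι → n → α) :
    ∑ i, w i • (c + R *ᵥ v i) = R *ᵥ ∑ i, w i • v i := by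
  simp only [smul_add, Finset.sum_add_distrib, ← Finset.sum_smul, hw, zero_smul, zero_add,
    mulVec_sum, mulVec_smul]

theorem sum_smul_mul_left (w : ι → α) (R : Matrix m n α) (M : ι → Matrix n k α) :
    ∑ i, w i • (R * M i) = R * ∑ i, w i • M i := by
  simp only [Matrix.mul_sum, Matrix.mul_smul]

end Weights

section Orthogonal

variable {α m n k l : Type*} [CommSemiring α] [Fintype m] [Fintype n] [DecidableEq n]
  {R : Matrix m n α}

theorem transpose_mul_mulVec_mulVec_cancel (hR : Rᵀ * R = 1) (A : Matrix n k α)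
    (v : n → α) : (R * A)ᵀ *ᵥ (R *ᵥ v) = Aᵀ *ᵥ v := by
  rw [transpose_mul, mulVec_mulVec, Matrix.mul_assoc, hR, Matrix.mul_one]

theorem transpose_mul_mul_mul_cancel (hR : Rᵀ * R = 1) (A : Matrix n k α) (B : Matrix n l α) :
    (R * A)ᵀ * (R * B) = Aᵀ * B := by
  rw [transpose_mul, Matrix.mul_assoc, ← Matrix.mul_assoc Rᵀ, hR, Matrix.one_mul]

end Orthogonal

theorem R12_discrete_strains_objective_general (p : ℕ) (N : Fin (p + 1) → ℝ → ℝ)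
    (hN : ∀ i, Differentiable ℝ (N i)) (hsum : ∀ ξ, ∑ i, N i ξ = 1)
    (r : Fin (p + 1) → Fin 3 → ℝ) (Am : Fin (p + 1) → Matrix (Fin 3) (Fin 3) ℝ)
    (R : Matrix (Fin 3) (Fin 3) ℝ) (hR : Rᵀ * R = 1)
    (c : Fin 3 → ℝ) (ξ : ℝ) :
    ((∑ i, N i ξ • (R * Am i))ᵀ *ᵥ vderiv (fun s => ∑ i, N i s • (c + R *ᵥ r i)) ξ
        = (∑ i, N i ξ • Am i)ᵀ *ᵥ vderiv (fun s => ∑ i, N i s • r i) ξ) ∧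
      ((∑ i, N i ξ • (R * Am i))ᵀ * mderiv (fun s => ∑ i, N i s • (R * Am i)) ξ
        = (∑ i, N i ξ • Am i)ᵀ * mderiv (fun s => ∑ i, N i s • Am i) ξ) := by
  have hNξ : ∀ i, DifferentiableAt ℝ (N i) ξ := fun i => hN i ξ
  have hD : ∑ i, deriv (N i) ξ = 0 := sum_deriv_eq_zero_of_sum_eq_one hNξ hsum
  constructor
  · rw [vderiv_sum_smul hNξ, vderiv_sum_smul hNξ, sum_smul_add_mulVec_of_sum_eq_zero hD,
      sum_smul_mul_left, transpose_mul_mulVec_mulVec_cancel hR]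
  · rw [mderiv_sum_smul hNξ, mderiv_sum_smul hNξ, sum_smul_mul_left, sum_smul_mul_left,
      transpose_mul_mul_mul_cancel hR]

theorem R12_discrete_strains_objective (p : ℕ) (N : Fin (p + 1) → ℝ → ℝ)
    (hN : ∀ i, Differentiable ℝ (N i)) (hsum : ∀ ξ, ∑ i, N i ξ = 1)
    (r : Fin (p + 1) → Fin 3 → ℝ) (Am : Fin (p + 1) → Matrix (Fin 3) (Fin 3) ℝ)
    (R : Matrix (Fin 3) (Fin 3) ℝ) (hR : Rᵀ * R = 1) (hRdet : R.det = 1)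
    (c : Fin 3 → ℝ) (ξ : ℝ) :
    ((∑ i, N i ξ • (R * Am i))ᵀ *ᵥ vderiv (fun s => ∑ i, N i s • (c + R *ᵥ r i)) ξ
        = (∑ i, N i ξ • Am i)ᵀ *ᵥ vderiv (fun s => ∑ i, N i s • r i) ξ) ∧
      ((∑ i, N i ξ • (R * Am i))ᵀ * mderiv (fun s => ∑ i, N i s • (R * Am i)) ξ
        = (∑ i, N i ξ • Am i)ᵀ * mderiv (fun s => ∑ i, N i s • Am i) ξ) :=
  R12_discrete_strains_objective_general p N hN hsum r Am R hR c ξ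
end

section
/- Closed form of the SE(3)-exponential map: let ψ, d ∈ ℝ³ with ψ ≠ 0, and let Θ be the real 4×4 matrix with upper-left 3×3 block ψ̃, upper-right 3×1 block d, and zero bottom row. Then the matrix exponential of Θ equals the block matrix [[Exp_{SO(3)}(ψ), T_{SO(3)}(ψ)ᵀ·d],[0,1]] with bottom row (0,0,0,1), where T_{SO(3)}(ψ) := 1 + ((cos‖ψ‖ − 1)/‖ψ‖²)·ψ̃ + ((1 − sin‖ψ‖/‖ψ‖)/‖ψ‖²)·ψ̃². -/
open Matrix

/-- The `SO(3)`-tangent map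
`T(ψ) = 1 + ((cos‖ψ‖ − 1)/‖ψ‖²)·ψ̃ + ((1 − sin‖ψ‖/‖ψ‖)/‖ψ‖²)·ψ̃²`. -/
noncomputable def Tso3 (ψ : Fin 3 → ℝ) : Matrix (Fin 3) (Fin 3) ℝ :=
  1 + ((Real.cos (norm3 ψ) - 1) / norm3 ψ ^ 2) • tilde ψ +
    ((1 - Real.sin (norm3 ψ) / norm3 ψ) / norm3 ψ ^ 2) • (tilde ψ ^ 2)

open scoped Nat

theorem exp_SE3_closed_form (ψ d : Fin 3 → ℝ) (hψ : ψ ≠ 0) :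
    NormedSpace.exp
        (Matrix.fromBlocks (tilde ψ) (Matrix.replicateCol (Fin 1) d) (0 : Matrix (Fin 1) (Fin 3) ℝ) (0 : Matrix (Fin 1) (Fin 1) ℝ))
      = Matrix.fromBlocks (rodrigues ψ) (Matrix.replicateCol (Fin 1) ((Tso3 ψ)ᵀ *ᵥ d)) (0 : Matrix (Fin 1) (Fin 3) ℝ) (1 : Matrix (Fin 1) (Fin 1) ℝ) := by
  have hsum : (0:ℝ) < ψ 0 ^ 2 + ψ 1 ^ 2 + ψ 2 ^ 2 := by
    obtain ⟨i, hi⟩ := Function.ne_iff.mp hψ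
    fin_cases i <;>
    · simp only [Fin.zero_eta, Fin.mk_one, Fin.isValue, Pi.zero_apply] at hi
      positivity
  set θ := norm3 ψ with hθdef
  have hθpos : 0 < θ := Real.sqrt_pos.mpr hsum
  have hθne : θ ≠ 0 := ne_of_gt hθpos
  have hθ2 : θ ^ 2 = ψ 0 ^ 2 + ψ 1 ^ 2 + ψ 2 ^ 2 := Real.sq_sqrt hsum.le
  set A := tilde ψ with hAdef
  set c2 : ℝ := (1 - Real.cos θ) / θ ^ 2 with hc2def
  set c3 : ℝ := (θ - Real.sin θ) / θ ^ 3 with hc3def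
  -- the cubic identity
  have hA3 : A ^ 3 = (-(θ ^ 2)) • A := by
    rw [hθ2, pow_succ, pow_two, hAdef]
    ext i j
    fin_cases i <;> fin_cases j <;>
      · simp [tilde, Matrix.mul_apply, Fin.sum_univ_three]
        ring
  have hAodd : ∀ k : ℕ, A ^ (2 * k + 1) = (-(θ ^ 2)) ^ k • A := by
    intro k
    induction k with
    | zero => simp
    | succ n ih =>
      have h : 2 * (n + 1) + 1 = (2 * n + 1) + 2 := by ring
      rw [h, pow_add, ih, Matrix.smul_mul]
      have : A * A ^ 2 = A ^ 3 := (pow_succ' A 2).symm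
      rw [this, hA3, smul_smul]
      congr 1
  have hAeven : ∀ k : ℕ, A ^ (2 * k + 2) = (-(θ ^ 2)) ^ k • A ^ 2 := by
    intro k
    have h : 2 * k + 2 = (2 * k + 1) + 1 := rfl
    rw [h, pow_succ, hAodd, Matrix.smul_mul, ← pow_two]
  have hA3k : ∀ k : ℕ, A ^ (2 * k + 3) = (-(θ ^ 2)) ^ k • A ^ 3 := by
    intro k
    have h : 2 * k + 3 = 2 * (k + 1) + 1 := by ring
    rw [h, hAodd, hA3, smul_smul, pow_succ]
  set Θ := Matrix.fromBlocks A (Matrix.replicateCol (Fin 1) d) (0 : Matrix (Fin 1) (Fin 3) ℝ)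
      (0 : Matrix (Fin 1) (Fin 1) ℝ) with hΘdef
  have hΘpow : ∀ n : ℕ, Θ ^ (n + 1)
      = Matrix.fromBlocks (A ^ (n + 1)) (A ^ n * Matrix.replicateCol (Fin 1) d) 0 0 := by
    intro n
    induction n with
    | zero => simp [hΘdef]
    | succ n ih =>
      rw [pow_succ, ih, hΘdef, Matrix.fromBlocks_multiply]
      simp [← pow_succ]
  have hΘ2 : Θ ^ 2 = Matrix.fromBlocks (A ^ 2) (A * Matrix.replicateCol (Fin 1) d) 0 0 := by
    simpa using hΘpow 1
  have hΘ3 : Θ ^ 3 = Matrix.fromBlocks (A ^ 3) (A ^ 2 * Matrix.replicateCol (Fin 1) d) 0 0 := by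
    simpa using hΘpow 2
  have hΘeven : ∀ k : ℕ, Θ ^ (2 * k + 2) = (-(θ ^ 2)) ^ k • Θ ^ 2 := by
    intro k
    rw [show 2 * k + 2 = (2 * k + 1) + 1 from rfl, hΘpow (2 * k + 1),
      show (2 * k + 1) + 1 = 2 * k + 2 from rfl, hAeven, hAodd, Matrix.smul_mul, hΘ2,
      Matrix.fromBlocks_smul]
    simp only [smul_zero]
  have hΘodd : ∀ k : ℕ, Θ ^ (2 * k + 3) = (-(θ ^ 2)) ^ k • Θ ^ 3 := by
    intro k
    rw [show 2 * k + 3 = (2 * k + 2) + 1 from rfl, hΘpow (2 * k + 2),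
      show (2 * k + 2) + 1 = 2 * k + 3 from rfl, hA3k, hAeven, Matrix.smul_mul, hΘ3,
      Matrix.fromBlocks_smul]
    simp only [smul_zero]
  -- scalar series
  have h1c : HasSum (fun n : ℕ => (-1:ℝ) ^ (n + 1) * θ ^ (2 * (n + 1)) / ((2 * (n + 1))! : ℝ))
      (Real.cos θ - 1) := by
    refine (hasSum_nat_add_iff
      (f := fun n : ℕ => (-1:ℝ) ^ n * θ ^ (2 * n) / ((2 * n)! : ℝ)) 1).mpr ?_
    simpa using Real.hasSum_cos θ
  have h1s : HasSum
      (fun n : ℕ => (-1:ℝ) ^ (n + 1) * θ ^ (2 * (n + 1) + 1) / ((2 * (n + 1) + 1)! : ℝ))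
      (Real.sin θ - θ) := by
    refine (hasSum_nat_add_iff
      (f := fun n : ℕ => (-1:ℝ) ^ n * θ ^ (2 * n + 1) / ((2 * n + 1)! : ℝ)) 1).mpr ?_
    simpa using Real.hasSum_sin θ
  have hc : HasSum (fun k : ℕ => (((2 * k + 2)! : ℝ))⁻¹ * (-(θ ^ 2)) ^ k) c2 := by
    have h2 := (h1c.neg).div_const (θ ^ 2)
    rw [neg_sub] at h2
    have hfun : (fun k : ℕ => (((2 * k + 2)! : ℝ))⁻¹ * (-(θ ^ 2)) ^ k)
        = fun n : ℕ => -((-1:ℝ) ^ (n + 1) * θ ^ (2 * (n + 1)) / ((2 * (n + 1))! : ℝ)) / θ ^ 2 := by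
      funext k
      have hk : 2 * (k + 1) = 2 * k + 2 := by ring
      rw [hk]
      have hfac : (((2 * k + 2)! : ℝ)) ≠ 0 := Nat.cast_ne_zero.mpr (Nat.factorial_ne_zero _)
      have hp : (-(θ ^ 2)) ^ k = (-1:ℝ) ^ k * θ ^ (2 * k) := by
        rw [neg_pow, pow_mul]
      rw [hp]
      field_simp
      ring
    rw [hc2def, hfun]
    exact h2
  have hs : HasSum (fun k : ℕ => (((2 * k + 3)! : ℝ))⁻¹ * (-(θ ^ 2)) ^ k) c3 := by
    have h2 := (h1s.neg).div_const (θ ^ 3)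
    rw [neg_sub] at h2
    have hfun : (fun k : ℕ => (((2 * k + 3)! : ℝ))⁻¹ * (-(θ ^ 2)) ^ k)
        = fun n : ℕ =>
          -((-1:ℝ) ^ (n + 1) * θ ^ (2 * (n + 1) + 1) / ((2 * (n + 1) + 1)! : ℝ)) / θ ^ 3 := by
      funext k
      have hk : 2 * (k + 1) + 1 = 2 * k + 3 := by ring
      rw [hk]
      have hfac : (((2 * k + 3)! : ℝ)) ≠ 0 := Nat.cast_ne_zero.mpr (Nat.factorial_ne_zero _)
      have hp : (-(θ ^ 2)) ^ k = (-1:ℝ) ^ k * θ ^ (2 * k) := by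
        rw [neg_pow, pow_mul]
      rw [hp]
      field_simp
      ring
    rw [hc3def, hfun]
    exact h2
  -- matrix series
  have he : HasSum (fun k : ℕ => (((2 * k + 2)! : ℝ))⁻¹ • Θ ^ (2 * k + 2)) (c2 • Θ ^ 2) := by
    have hfun : (fun k : ℕ => (((2 * k + 2)! : ℝ))⁻¹ • Θ ^ (2 * k + 2))
        = fun k : ℕ => ((((2 * k + 2)! : ℝ))⁻¹ * (-(θ ^ 2)) ^ k) • Θ ^ 2 := by
      funext k
      rw [hΘeven k, smul_smul]
    rw [hfun]
    exact hc.smul_const _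
  have ho : HasSum (fun k : ℕ => (((2 * k + 3)! : ℝ))⁻¹ • Θ ^ (2 * k + 3)) (c3 • Θ ^ 3) := by
    have hfun : (fun k : ℕ => (((2 * k + 3)! : ℝ))⁻¹ • Θ ^ (2 * k + 3))
        = fun k : ℕ => ((((2 * k + 3)! : ℝ))⁻¹ * (-(θ ^ 2)) ^ k) • Θ ^ 3 := by
      funext k
      rw [hΘodd k, smul_smul]
    rw [hfun]
    exact hs.smul_const _
  have hshift : HasSum (fun n : ℕ => (((n + 2)! : ℝ))⁻¹ • Θ ^ (n + 2))
      (c2 • Θ ^ 2 + c3 • Θ ^ 3) := by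
    refine HasSum.even_add_odd ?_ ?_
    · convert he using 2 with k
    · convert ho using 2 with k
  have hfull : HasSum (fun n : ℕ => ((n ! : ℝ))⁻¹ • Θ ^ n)
      (c2 • Θ ^ 2 + c3 • Θ ^ 3 + (1 + Θ)) := by
    have h := (hasSum_nat_add_iff (f := fun n : ℕ => ((n ! : ℝ))⁻¹ • Θ ^ n) 2).mp hshift
    have hsum2 : (∑ i ∈ Finset.range 2, ((i ! : ℝ))⁻¹ • Θ ^ i) = 1 + Θ := by
      simp [Finset.sum_range_succ]
    rwa [hsum2] at h
  -- transpose facts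
  have hAT : Aᵀ = -A := by
    rw [hAdef]
    ext i j
    fin_cases i <;> fin_cases j <;> simp [tilde]
  have hT : (Tso3 ψ)ᵀ = 1 + c2 • A + c3 • A ^ 2 := by
    rw [Tso3, ← hθdef, ← hAdef, transpose_add, transpose_add, transpose_one, transpose_smul,
      transpose_smul, Matrix.transpose_pow, hAT]
    have h1 : ((Real.cos θ - 1) / θ ^ 2) • (-A) = c2 • A := by
      rw [smul_neg, ← neg_smul, hc2def]
      congr 1
      field_simp
      ring
    have h2 : (-A) ^ 2 = A ^ 2 := neg_sq A
    have h3 : (1 - Real.sin θ / θ) / θ ^ 2 = c3 := by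
      rw [hc3def, one_sub_div hθne, div_div]
      congr 1
      ring
    rw [h1, h2, h3]
  -- final assembly
  rw [NormedSpace.exp_eq_tsum (𝕂 := ℝ)]
  refine Eq.trans hfull.tsum_eq ?_
  have hkey : c3 * (-(θ ^ 2)) = Real.sin θ / θ - 1 := by
    rw [hc3def]
    field_simp
    ring
  have hUL : c2 • A ^ 2 + c3 • A ^ 3 + (1 + A) = rodrigues ψ := by
    rw [rodrigues, ← hθdef, ← hAdef, hA3, smul_smul, hkey, sub_smul, one_smul]
    abel
  have hUR : c2 • (A * Matrix.replicateCol (Fin 1) d) + c3 • (A ^ 2 * Matrix.replicateCol (Fin 1) d)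
        + ((0 : Matrix (Fin 3) (Fin 1) ℝ) + Matrix.replicateCol (Fin 1) d)
      = Matrix.replicateCol (Fin 1) ((Tso3 ψ)ᵀ *ᵥ d) := by
    rw [Matrix.replicateCol_mulVec, hT, Matrix.add_mul, Matrix.add_mul, Matrix.one_mul,
      Matrix.smul_mul, Matrix.smul_mul]
    abel
  rw [hΘ2, hΘ3, hΘdef, Matrix.fromBlocks_smul, Matrix.fromBlocks_smul,
    ← Matrix.fromBlocks_one (l := Fin 3) (m := Fin 1) (α := ℝ),
    Matrix.fromBlocks_add, Matrix.fromBlocks_add, Matrix.fromBlocks_add, hUL, hUR]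
  simp
end
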